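/- arXiv:2209.09851 — 2 statements merged into one kernel-verified Lean document; each statement's English description precedes it below -/
import Mathlib

section
/- Let B be the bipartite graph that is a single even cycle C_{2q} with q ≥ 2. Then λ(B) = q, where λ is the recession connectivity. -/
/-! Scaffolding for bipartite graphs given by edge sets `B : Finset (L × R)`,
their recession graphs, and the recession connectivity `λ`. -/

variable {L R : Type*}

/-- The undirected simple graph on `L ⊕ R` determined by an edge set `S ⊆ L × R`. -/
def sgraph (S : Finset (L × R)) : SimpleGraph (L ⊕ R) where
  Adj v w := (∃ e ∈ S, v = Sum.inl e.1 ∧ w = Sum.inr e.2) ∨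
             (∃ e ∈ S, w = Sum.inl e.1 ∧ v = Sum.inr e.2)
  symm := by
    constructor
    rintro v w (⟨e, he, h1, h2⟩ | ⟨e, he, h1, h2⟩)
    · exact Or.inr ⟨e, he, h1, h2⟩
    · exact Or.inl ⟨e, he, h1, h2⟩
  loopless := by
    constructor
    rintro v (⟨e, _, h1, h2⟩ | ⟨e, _, h1, h2⟩) <;> subst h1 <;> simp_all

/-- A vertex is incident to the edge set `B` if it is an endpoint of one of its edges. -/
def incid (B : Finset (L × R)) (v : L ⊕ R) : Prop :=
  ∃ e ∈ B, v = Sum.inl e.1 ∨ v = Sum.inr e.2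

/-- The arcs of the recession graph `R(S; B)`: every edge of `B` gives an arc from its
`L`-endpoint to its `R`-endpoint, and every edge of `S` additionally gives the reverse arc. -/
def recArc (S B : Finset (L × R)) (v w : L ⊕ R) : Prop :=
  (∃ e ∈ B, v = Sum.inl e.1 ∧ w = Sum.inr e.2) ∨
  (∃ e ∈ S, w = Sum.inl e.1 ∧ v = Sum.inr e.2)

/-- The recession graph `R(S; B)` is strongly connected: every vertex of `B` reaches
every other vertex of `B` by a directed path. -/
def RecStrong (S B : Finset (L × R)) : Prop :=
  ∀ v w, incid B v → incid B w → Relation.ReflTransGen (recArc S B) v w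

/-- The number of connected components of (the graph of) `S` containing at least one edge. -/
noncomputable def numComp (S : Finset (L × R)) : ℕ :=
  Set.ncard {C : (sgraph S).ConnectedComponent |
    ∃ e ∈ S, C = (sgraph S).connectedComponentMk (Sum.inl e.1)}

/-- The recession connectivity `λ(B)`:  the maximum number of connected components of a
subgraph `S ⊆ B` for which the recession graph `R(S; B)` is strongly connected. -/
noncomputable def recConn (B : Finset (L × R)) : ℕ :=
  sSup {m | ∃ S ⊆ B, RecStrong S B ∧ numComp S = m}

/-- The graph of the edge set `B` is connected (on its own vertex set). -/
def ConnectedOn (B : Finset (L × R)) : Prop :=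
  B.Nonempty ∧ ∀ v w, incid B v → incid B w → (sgraph B).Reachable v w

/-- The even cycle `C_{2q}` as a bipartite graph with parts `Fin q` and `Fin q`:
left vertex `i` is joined to right vertices `i` and `i - 1` (indices mod `q`), i.e. the
edges are `(i, i)` and `(i + 1, i)` for `i : Fin q`. -/
def cycleEdges (q : ℕ) [NeZero q] : Finset (Fin q × Fin q) :=
  (Finset.univ.image fun i : Fin q => (i, i)) ∪
    (Finset.univ.image fun i : Fin q => (i + 1, i))

/-! The perfect matching `M = {(i, i)}` of `C_{2q}` has `q` components, and `R(M; C_{2q})` is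
strongly connected: the cycle arc from left vertex `i + 1` to right vertex `i`, followed by the
reversed matching arc back to left vertex `i`, steps down by one, hence around the whole cycle,
and each right vertex is joined both ways to its matched left vertex. Conversely,
every component of a subgraph `S` that contains an edge contains a left vertex, so there are at
most `q` of them. -/

open Finset Relation

section Components

variable {L R : Type*}

def funGraph [Fintype L] [DecidableEq L] [DecidableEq R] (f : L → R) : Finset (L × R) :=
  univ.image fun i => (i, f i)

lemma numComp_le_card [Fintype L] (S : Finset (L × R)) : numComp S ≤ Fintype.card L := by
  have hsub : {C : (sgraph S).ConnectedComponent |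
      ∃ e ∈ S, C = (sgraph S).connectedComponentMk (Sum.inl e.1)} ⊆
      Set.range fun i : L => (sgraph S).connectedComponentMk (Sum.inl i) := by
    rintro C ⟨e, -, rfl⟩
    exact ⟨e.1, rfl⟩
  calc numComp S
      ≤ (Set.range fun i : L => (sgraph S).connectedComponentMk (Sum.inl i)).ncard :=
        Set.ncard_le_ncard hsub (Set.finite_range _)
    _ ≤ Nat.card L := Finite.card_range_le _
    _ = Fintype.card L := Nat.card_eq_fintype_card

variable [Fintype L] [DecidableEq L] [DecidableEq R]

lemma sgraph_funGraph_reachable_elim_eq (f : L → R) {v w : L ⊕ R}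
    (h : (sgraph (funGraph f)).Reachable v w) : Sum.elim f id v = Sum.elim f id w := by
  rw [SimpleGraph.reachable_iff_reflTransGen] at h
  induction h with
  | refl => rfl
  | tail _ hadj ih =>
    rw [ih]
    rcases hadj with ⟨e, he, rfl, rfl⟩ | ⟨e, he, rfl, rfl⟩ <;>
    · obtain ⟨i, -, rfl⟩ := mem_image.mp he
      rfl

lemma numComp_funGraph {f : L → R} (hf : Function.Injective f) :
    numComp (funGraph f) = Fintype.card L := by
  set mk := fun i : L => (sgraph (funGraph f)).connectedComponentMk (Sum.inl i)
  have hset : {C : (sgraph (funGraph f)).ConnectedComponent |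
      ∃ e ∈ funGraph f, C = (sgraph (funGraph f)).connectedComponentMk (Sum.inl e.1)} =
      Set.range mk := by
    ext C
    constructor
    · rintro ⟨e, -, rfl⟩
      exact ⟨e.1, rfl⟩
    · rintro ⟨i, rfl⟩
      exact ⟨(i, f i), mem_image_of_mem _ (mem_univ i), rfl⟩
  have hmk : Function.Injective mk := fun i j hij =>
    hf (sgraph_funGraph_reachable_elim_eq f (SimpleGraph.ConnectedComponent.eq.mp hij))
  rw [numComp, hset, Set.ncard_range_of_injective hmk, Nat.card_eq_fintype_card]

end Components

section RecessionArcs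

variable {L R : Type*} {S B : Finset (L × R)} {e : L × R}

lemma recArc_inl_inr (he : e ∈ B) : recArc S B (Sum.inl e.1) (Sum.inr e.2) :=
  Or.inl ⟨e, he, rfl, rfl⟩

lemma recArc_inr_inl (he : e ∈ S) : recArc S B (Sum.inr e.2) (Sum.inl e.1) :=
  Or.inr ⟨e, he, rfl, rfl⟩

end RecessionArcs

lemma Fin.reflTransGen_of_forall_succ {q : ℕ} [NeZero q] {r : Fin q → Fin q → Prop}
    (h : ∀ i, r (i + 1) i) (i j : Fin q) : ReflTransGen r i j := by
  open Fin.NatCast Fin.CommRing in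
  have hdown : ∀ k : ℕ, ReflTransGen r i (i - k) := by
    intro k
    induction k with
    | zero => simpa using .refl
    | succ k ih =>
      have hstep := h (i - k - 1)
      rw [sub_add_cancel] at hstep
      have hk : i - ((k + 1 : ℕ) : Fin q) = i - k - 1 := by push_cast; ring
      exact hk ▸ ih.tail hstep
  simpa [Fin.cast_val_eq_self] using hdown (i - j).val

section Cycle

variable {q : ℕ} [NeZero q]

lemma funGraph_id_subset_cycleEdges : funGraph (id : Fin q → Fin q) ⊆ cycleEdges q :=
  subset_union_left

lemma recStrong_funGraph_id_cycleEdges :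
    RecStrong (funGraph (id : Fin q → Fin q)) (cycleEdges q) := by
  set r := recArc (funGraph (id : Fin q → Fin q)) (cycleEdges q)
  have hdiag (i : Fin q) : (i, i) ∈ funGraph (id : Fin q → Fin q) :=
    mem_image_of_mem _ (mem_univ i)
  have hsucc (i : Fin q) : (i + 1, i) ∈ cycleEdges q :=
    mem_union_right _ (mem_image_of_mem _ (mem_univ i))
  have hLL (i j : Fin q) : ReflTransGen r (Sum.inl i) (Sum.inl j) :=
    (Fin.reflTransGen_of_forall_succ (r := fun i j => ReflTransGen r (Sum.inl i) (Sum.inl j))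
      (fun i => .tail (.single (recArc_inl_inr (hsucc i))) (recArc_inr_inl (hdiag i))) i j).lift'
      Sum.inl fun _ _ h => h
  have hout (v : Fin q ⊕ Fin q) : ∃ i, ReflTransGen r v (Sum.inl i) := by
    rcases v with i | i
    exacts [⟨i, .refl⟩, ⟨i, .single (recArc_inr_inl (hdiag i))⟩]
  have hin (w : Fin q ⊕ Fin q) : ∃ i, ReflTransGen r (Sum.inl i) w := by
    rcases w with i | i
    exacts [⟨i, .refl⟩,
      ⟨i, .single (recArc_inl_inr (funGraph_id_subset_cycleEdges (hdiag i)))⟩]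
  intro v w _ _
  obtain ⟨i, hvi⟩ := hout v
  obtain ⟨j, hjw⟩ := hin w
  exact (hvi.trans (hLL i j)).trans hjw

end Cycle

theorem recConn_cycle_general (q : ℕ) [NeZero q] :
    recConn (cycleEdges q) = q := by
  refine IsGreatest.csSup_eq ⟨⟨funGraph id, funGraph_id_subset_cycleEdges,
    recStrong_funGraph_id_cycleEdges, ?_⟩, ?_⟩
  · simpa using numComp_funGraph (L := Fin q) Function.injective_id
  · rintro m ⟨S, -, -, rfl⟩
    simpa using numComp_le_card S

/-- For the even cycle `C_{2q}` with `q ≥ 2`, the recession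
connectivity is `λ(C_{2q}) = q`. -/
theorem recConn_cycle (q : ℕ) [NeZero q] (hq : 2 ≤ q) :
    recConn (cycleEdges q) = q :=
  recConn_cycle_general q
end

section
/- Let B be a bipartite graph with parts {v_1,…,v_n} and {w_1,…,w_d}, let r be the number of degree-1 vertices among the v_i and s the number of degree-1 vertices among the w_j. Then λ(B) ≤ min{n − r, d − s} whenever n − r ≥ 1 and d − s ≥ 1, where λ is the recession connectivity. -/
/-! Scaffolding for bipartite graphs given by edge sets `B : Finset (L × R)`,
their recession graphs, and the recession connectivity `λ`. -/

variable {L R : Type*}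

/-! A component of `S` with an edge either contains a non-leaf of `B` in `L`, or all its
`L`-vertices are leaves of `B`. A leaf met by `S` has its unique edge in `S`, so in the second
case no arc of `R(S; B)` leaves the component, and strong connectivity makes it the only one.
Hence `λ(B) ≤ max 1 (n - r) = n - r`. Dually for `R`: no arc enters a component whose
`R`-vertices are all leaves. -/

theorem Relation.ReflTransGen.of_forall_imp {α : Type*} {r : α → α → Prop} {P : α → Prop}
    (hP : ∀ x y, r x y → P x → P y) {a b : α} (hab : Relation.ReflTransGen r a b) (ha : P a) :
    P b := by
  induction hab with
  | refl => exact ha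
  | tail _ hyz ih => exact hP _ _ hyz ih

theorem Set.ncard_le_card_of_forall_notMem_image {α β : Type*} {CS : Set β} (g : α → β)
    {T : Finset α} (hT : 1 ≤ T.card) (h : ∀ C ∈ CS, (∀ a ∈ T, g a ≠ C) → CS ⊆ {C}) :
    CS.ncard ≤ T.card := by
  by_cases hout : ∃ C ∈ CS, ∀ a ∈ T, g a ≠ C
  · obtain ⟨C, hC, hCT⟩ := hout
    calc CS.ncard ≤ ({C} : Set β).ncard :=
          Set.ncard_le_ncard (h C hC hCT) (Set.finite_singleton C)
      _ = 1 := Set.ncard_singleton C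
      _ ≤ T.card := hT
  · push Not at hout
    have hsub : CS ⊆ g '' T := fun C hC => by
      obtain ⟨a, ha, rfl⟩ := hout C hC
      exact ⟨a, ha, rfl⟩
    calc CS.ncard ≤ (g '' T).ncard := Set.ncard_le_ncard hsub (T.finite_toSet.image g)
      _ ≤ (T : Set α).ncard := Set.ncard_image_le T.finite_toSet
      _ = T.card := Set.ncard_coe_finset T

theorem Finset.mem_of_card_filter_eq_one {α : Type*} {S B : Finset α} {p : α → Prop}
    [DecidablePred p] (hSB : S ⊆ B) (hp : (B.filter p).card = 1) {e e' : α} (he : e ∈ B)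
    (hpe : p e) (he' : e' ∈ S) (hpe' : p e') : e ∈ S := by
  have := Finset.card_le_one.mp hp.le e (Finset.mem_filter.2 ⟨he, hpe⟩) e'
    (Finset.mem_filter.2 ⟨hSB he', hpe'⟩)
  exact this ▸ he'

theorem sgraph_adj_of_mem {S : Finset (L × R)} {e : L × R} (he : e ∈ S) :
    (sgraph S).Adj (Sum.inl e.1) (Sum.inr e.2) :=
  Or.inl ⟨e, he, rfl, rfl⟩

theorem incid_of_reachable {S : Finset (L × R)} {e : L × R} (he : e ∈ S) {x : L ⊕ R}
    (hx : (sgraph S).Reachable x (Sum.inl e.1)) : incid S x := by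
  by_cases hxe : x = Sum.inl e.1
  · exact ⟨e, he, Or.inl hxe⟩
  · obtain ⟨y, ⟨f, hf, hxf, -⟩ | ⟨f, hf, -, hxf⟩⟩ := hx.nonempty_neighborSet_left hxe
    · exact ⟨f, hf, Or.inl hxf⟩
    · exact ⟨f, hf, Or.inr hxf⟩

theorem exists_fst_eq_of_reachable {S : Finset (L × R)} {e₀ : L × R} (he₀ : e₀ ∈ S) {v : L}
    (hv : (sgraph S).Reachable (Sum.inl v) (Sum.inl e₀.1)) : ∃ f ∈ S, f.1 = v := by
  obtain ⟨f, hf, hvf⟩ := incid_of_reachable he₀ hv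
  exact ⟨f, hf, by simpa [eq_comm] using hvf⟩

theorem exists_snd_eq_of_reachable {S : Finset (L × R)} {e₀ : L × R} (he₀ : e₀ ∈ S) {w : R}
    (hw : (sgraph S).Reachable (Sum.inr w) (Sum.inl e₀.1)) : ∃ f ∈ S, f.2 = w := by
  obtain ⟨f, hf, hwf⟩ := incid_of_reachable he₀ hw
  exact ⟨f, hf, by simpa [eq_comm] using hwf⟩

section OneSide

variable {S B : Finset (L × R)} {e₀ e : L × R}

theorem reachable_of_forall_fst_leaf [DecidableEq L] (hSB : S ⊆ B) (hS : RecStrong S B)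
    (he₀ : e₀ ∈ S) (hleaf : ∀ v, (sgraph S).Reachable (Sum.inl v) (Sum.inl e₀.1) →
      (B.filter fun f => f.1 = v).card = 1)
    (he : e ∈ S) : (sgraph S).Reachable (Sum.inl e.1) (Sum.inl e₀.1) := by
  have hclosed : ∀ x y, recArc S B x y → (sgraph S).Reachable x (Sum.inl e₀.1) →
      (sgraph S).Reachable y (Sum.inl e₀.1) := by
    rintro x y (⟨f, hfB, rfl, rfl⟩ | ⟨f, hfS, rfl, rfl⟩) hx
    · obtain ⟨g, hgS, hg⟩ := exists_fst_eq_of_reachable he₀ hx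
      have hfS : f ∈ S := Finset.mem_of_card_filter_eq_one hSB (hleaf _ hx) hfB rfl hgS hg
      exact (sgraph_adj_of_mem hfS).reachable.symm.trans hx
    · exact (sgraph_adj_of_mem hfS).reachable.trans hx
  exact (hS _ _ ⟨e₀, hSB he₀, Or.inl rfl⟩ ⟨e, hSB he, Or.inl rfl⟩).of_forall_imp hclosed
    SimpleGraph.Reachable.rfl

theorem reachable_of_forall_snd_leaf [DecidableEq R] (hSB : S ⊆ B) (hS : RecStrong S B)
    (he₀ : e₀ ∈ S) (hleaf : ∀ w, (sgraph S).Reachable (Sum.inr w) (Sum.inl e₀.1) →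
      (B.filter fun f => f.2 = w).card = 1)
    (he : e ∈ S) : (sgraph S).Reachable (Sum.inl e.1) (Sum.inl e₀.1) := by
  have hclosed : ∀ x y, flip (recArc S B) x y → (sgraph S).Reachable x (Sum.inl e₀.1) →
      (sgraph S).Reachable y (Sum.inl e₀.1) := by
    rintro x y (⟨f, hfB, rfl, rfl⟩ | ⟨f, hfS, rfl, rfl⟩) hx
    · obtain ⟨g, hgS, hg⟩ := exists_snd_eq_of_reachable he₀ hx
      have hfS : f ∈ S := Finset.mem_of_card_filter_eq_one hSB (hleaf _ hx) hfB rfl hgS hg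
      exact (sgraph_adj_of_mem hfS).reachable.trans hx
    · exact (sgraph_adj_of_mem hfS).reachable.symm.trans hx
  exact (Relation.reflTransGen_swap.mpr (hS _ _ ⟨e, hSB he, Or.inl rfl⟩
    ⟨e₀, hSB he₀, Or.inl rfl⟩)).of_forall_imp hclosed SimpleGraph.Reachable.rfl

end OneSide

theorem numComp_le_card_sub_fst_leaves [Fintype L] [DecidableEq L] {S B : Finset (L × R)}
    (hSB : S ⊆ B) (hS : RecStrong S B)
    (h1 : 1 ≤ Fintype.card L - (Finset.univ.filter fun v : L =>
      (B.filter fun e => e.1 = v).card = 1).card) :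
    numComp S ≤ Fintype.card L - (Finset.univ.filter fun v : L =>
      (B.filter fun e => e.1 = v).card = 1).card := by
  rw [← Finset.card_compl] at h1 ⊢
  refine Set.ncard_le_card_of_forall_notMem_image (fun v => (sgraph S).connectedComponentMk
    (Sum.inl v)) h1 ?_
  rintro _ ⟨e₀, he₀, rfl⟩ hnon _ ⟨e, he, rfl⟩
  refine SimpleGraph.ConnectedComponent.sound
    (reachable_of_forall_fst_leaf hSB hS he₀ (fun v hv => ?_) he)
  by_contra hv'
  exact hnon v (by simpa using hv') (SimpleGraph.ConnectedComponent.sound hv)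

theorem numComp_le_card_sub_snd_leaves [Fintype R] [DecidableEq R] {S B : Finset (L × R)}
    (hSB : S ⊆ B) (hS : RecStrong S B)
    (h2 : 1 ≤ Fintype.card R - (Finset.univ.filter fun w : R =>
      (B.filter fun e => e.2 = w).card = 1).card) :
    numComp S ≤ Fintype.card R - (Finset.univ.filter fun w : R =>
      (B.filter fun e => e.2 = w).card = 1).card := by
  rw [← Finset.card_compl] at h2 ⊢
  refine Set.ncard_le_card_of_forall_notMem_image (fun w => (sgraph S).connectedComponentMk
    (Sum.inr w)) h2 ?_
  rintro _ ⟨e₀, he₀, rfl⟩ hnon _ ⟨e, he, rfl⟩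
  refine SimpleGraph.ConnectedComponent.sound
    (reachable_of_forall_snd_leaf hSB hS he₀ (fun w hw => ?_) he)
  by_contra hw'
  exact hnon w (by simpa using hw') (SimpleGraph.ConnectedComponent.sound hw)

/-- Let `B` be a bipartite graph with parts `L` (of size `n`) and `R`
(of size `d`), let `r` be the number of degree-1 vertices of `L` and `s` the number of
degree-1 vertices of `R`.  If `n − r ≥ 1` and `d − s ≥ 1`, then
`λ(B) ≤ min (n − r) (d − s)`. -/
theorem recConn_le_min_of_leaves {L R : Type*} [Fintype L] [Fintype R]
    [DecidableEq L] [DecidableEq R] (B : Finset (L × R))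
    (r s : ℕ)
    (hr : r = (Finset.univ.filter fun v : L =>
      (B.filter fun e => e.1 = v).card = 1).card)
    (hs : s = (Finset.univ.filter fun w : R =>
      (B.filter fun e => e.2 = w).card = 1).card)
    (h1 : 1 ≤ Fintype.card L - r) (h2 : 1 ≤ Fintype.card R - s) :
    recConn B ≤ min (Fintype.card L - r) (Fintype.card R - s) := by
  subst hr hs
  refine csSup_le' ?_
  rintro _ ⟨S, hSB, hS, rfl⟩
  exact le_min (numComp_le_card_sub_fst_leaves hSB hS h1)
    (numComp_le_card_sub_snd_leaves hSB hS h2)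
end
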